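/- arXiv:1201.3722 — 4 statements merged into one kernel-verified Lean document; each statement's English description precedes it below -/
import Mathlib

section
/- If a set of triplets τ is consistent with some rooted tree, then the directed graph G_τ is a directed acyclic graph (it contains no directed cycle). -/
/-- A rooted (phylogenetic) tree on the taxa set `X`, presented abstractly via its
ancestor relation: `anc u v` means `u` is an ancestor of `v` (reflexively).
Ancestors of a fixed node are totally ordered, every pair of nodes has a
lowest common ancestor `lca`, `depth` is the distance from the root, and the
leaves are distinctly labeled by `X` and are minimal nodes. -/
structure PhyloTree (X : Type) where
  V : Type
  [fin : Fintype V]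
  anc : V → V → Prop
  anc_refl : ∀ v, anc v v
  anc_trans : ∀ u v w, anc u v → anc v w → anc u w
  anc_antisymm : ∀ u v, anc u v → anc v u → u = v
  root : V
  root_anc : ∀ v, anc root v
  anc_total : ∀ u v w, anc u w → anc v w → anc u v ∨ anc v u
  lca : V → V → V
  lca_anc_left : ∀ u v, anc (lca u v) u
  lca_anc_right : ∀ u v, anc (lca u v) v
  lca_greatest : ∀ u v w, anc w u → anc w v → anc w (lca u v)
  depth : V → ℕ
  depth_root : depth root = 0
  depth_strict : ∀ u v, anc u v → u ≠ v → depth u < depth v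
  leaf : X → V
  leaf_inj : Function.Injective leaf
  leaf_min : ∀ (x : X) (v : V), anc (leaf x) v → v = leaf x

/-- `l_T`: the length of the longest path starting from the root, i.e. the maximal depth. -/
noncomputable def PhyloTree.lT {X : Type} (T : PhyloTree X) : ℕ := sSup (Set.range T.depth)

/-- The height function of the tree `T`: `h_T(i,j) = l_T − depth(lca(i,j))`. -/
noncomputable def PhyloTree.hgt {X : Type} (T : PhyloTree X) (i j : X) : ℕ :=
  T.lT - T.depth (T.lca (T.leaf i) (T.leaf j))

/-- The triplet `ij|k` is consistent with `T`: the lowest common ancestor of `i` and `j`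
is a proper descendant of the lowest common ancestor of `i` and `k`. -/
def PhyloTree.Consistent {X : Type} (T : PhyloTree X) (i j k : X) : Prop :=
  T.anc (T.lca (T.leaf i) (T.leaf k)) (T.lca (T.leaf i) (T.leaf j)) ∧
    T.lca (T.leaf i) (T.leaf k) ≠ T.lca (T.leaf i) (T.leaf j)

/-- The directed graph `G_τ` of a triplet set `τ`: vertices are unordered pairs,
and each triplet `ij|k ∈ τ` contributes the edges `{i,j} → {i,k}` and `{i,j} → {j,k}`. -/
def GTauEdge {X : Type} (τ : Set (X × X × X)) (p q : Sym2 X) : Prop :=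
  ∃ i j k : X, (i, j, k) ∈ τ ∧ p = s(i, j) ∧ (q = s(i, k) ∨ q = s(j, k))

/-!
Every edge `{i,j} → {i,k}` or `{i,j} → {j,k}` of `G_τ` strictly decreases the depth of the
lowest common ancestor of the pair: `ij|k` says `lca(i,k)` lies strictly above `lca(i,j)`,
and then `lca(j,k) = lca(i,k)` as well. A directed cycle would make this depth drop
strictly below itself.
-/

namespace PhyloTree

variable {X : Type} (T : PhyloTree X)

theorem lca_comm (u v : T.V) : T.lca u v = T.lca v u :=
  T.anc_antisymm _ _
    (T.lca_greatest _ _ _ (T.lca_anc_right u v) (T.lca_anc_left u v))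
    (T.lca_greatest _ _ _ (T.lca_anc_right v u) (T.lca_anc_left v u))

theorem lca_eq_of_anc_of_ne {u v w : T.V} (hanc : T.anc (T.lca u w) (T.lca u v))
    (hne : T.lca u w ≠ T.lca u v) : T.lca v w = T.lca u w := by
  have huw_vw : T.anc (T.lca u w) (T.lca v w) :=
    T.lca_greatest _ _ _ (T.anc_trans _ _ _ hanc (T.lca_anc_right _ _)) (T.lca_anc_right _ _)
  rcases T.anc_total (T.lca u v) (T.lca v w) v (T.lca_anc_right _ _) (T.lca_anc_left _ _)
    with huv_vw | hvw_uv
  · have huv_uw : T.anc (T.lca u v) (T.lca u w) :=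
      T.lca_greatest _ _ _ (T.lca_anc_left _ _) (T.anc_trans _ _ _ huv_vw (T.lca_anc_right _ _))
    exact absurd (T.anc_antisymm _ _ hanc huv_uw) hne
  · have hvw_uw : T.anc (T.lca v w) (T.lca u w) :=
      T.lca_greatest _ _ _ (T.anc_trans _ _ _ hvw_uv (T.lca_anc_left _ _)) (T.lca_anc_right _ _)
    exact T.anc_antisymm _ _ hvw_uw huw_vw

noncomputable def lcaDepth : Sym2 X → ℕ :=
  Sym2.lift ⟨fun i j => T.depth (T.lca (T.leaf i) (T.leaf j)),
    fun _ _ => congrArg T.depth (T.lca_comm _ _)⟩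

@[simp]
theorem lcaDepth_mk (i j : X) : T.lcaDepth s(i, j) = T.depth (T.lca (T.leaf i) (T.leaf j)) :=
  rfl

theorem lcaDepth_lt_of_consistent {i j k : X} (h : T.Consistent i j k) :
    T.lcaDepth s(i, k) < T.lcaDepth s(i, j) ∧ T.lcaDepth s(j, k) < T.lcaDepth s(i, j) := by
  obtain ⟨hanc, hne⟩ := h
  have hlt := T.depth_strict _ _ hanc hne
  simp only [lcaDepth_mk, T.lca_eq_of_anc_of_ne hanc hne]
  exact ⟨hlt, hlt⟩

theorem lcaDepth_lt_of_gTauEdge {τ : Set (X × X × X)}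
    (hτ : ∀ t ∈ τ, T.Consistent t.1 t.2.1 t.2.2) {p q : Sym2 X} (hpq : GTauEdge τ p q) :
    T.lcaDepth q < T.lcaDepth p := by
  obtain ⟨i, j, k, hmem, rfl, rfl | rfl⟩ := hpq
  · exact (T.lcaDepth_lt_of_consistent (hτ _ hmem)).1
  · exact (T.lcaDepth_lt_of_consistent (hτ _ hmem)).2

end PhyloTree

/-- if a set of triplets `τ` is consistent with some rooted tree,
then the directed graph `G_τ` contains no directed cycle. -/
theorem Gtau_acyclic_of_tree_consistent {X : Type} (τ : Set (X × X × X))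
    (h : ∃ T : PhyloTree X, ∀ t ∈ τ, T.Consistent t.1 t.2.1 t.2.2) :
    ∀ p : Sym2 X, ¬ Relation.TransGen (GTauEdge τ) p p := by
  obtain ⟨T, hT⟩ := h
  intro p hp
  have hdesc : Relation.TransGen (· > ·) (T.lcaDepth p) (T.lcaDepth p) :=
    Relation.TransGen.lift (p := (· > ·)) T.lcaDepth
      (fun _ _ hpq => T.lcaDepth_lt_of_gTauEdge hT hpq) p p hp
  rw [Relation.transGen_eq_self] at hdesc
  exact lt_irrefl _ hdesc
end

section
/- Let N be a rooted phylogenetic network and i, j, k three distinct leaves. If h_N(i,j) < h_N(i,k) or h_N(i,j) < h_N(j,k), then the triplet ij|k is consistent with N. -/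
/-- A directed walk of length `n` (number of edges) from `u` to `v` in the digraph `E`. -/
def DiWalk {V : Type} (E : V → V → Prop) (u v : V) (n : ℕ) : Prop :=
  ∃ f : Fin (n + 1) → V, f 0 = u ∧ f (Fin.last n) = v ∧
    ∀ i : Fin n, E (f i.castSucc) (f i.succ)

/-- A rooted phylogenetic network on the taxa set `X`: a finite rooted directed acyclic
graph in which every node is reachable from the root, the root has no incoming edge,
and the sinks are exactly the leaves, which are distinctly labeled by `X`. -/
structure PhyloNet (X : Type) where
  V : Type
  [fin : Fintype V]
  edge : V → V → Prop
  acyclic : ∀ v, ¬ Relation.TransGen edge v v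
  root : V
  root_src : ∀ v, ¬ edge v root
  reach : ∀ v, Relation.ReflTransGen edge root v
  leaf : X → V
  leaf_inj : Function.Injective leaf
  leaf_sink : ∀ (x : X) (v : V), ¬ edge (leaf x) v
  sink_leaf : ∀ v : V, (∀ w, ¬ edge v w) → ∃ x, v = leaf x

/-- `u` is an ancestor of `v` (there is a directed path from `u` to `v`). -/
def PhyloNet.anc {X : Type} (N : PhyloNet X) (u v : N.V) : Prop :=
  Relation.ReflTransGen N.edge u v

/-- `d(v,r)`: the length of the longest directed path from the root to `v`. -/
noncomputable def PhyloNet.dep {X : Type} (N : PhyloNet X) (v : N.V) : ℕ :=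
  sSup {n | DiWalk N.edge N.root v n}

/-- `l_N`: the length of the longest directed path from the root to a leaf. -/
noncomputable def PhyloNet.lN {X : Type} (N : PhyloNet X) : ℕ :=
  sSup {n | ∃ x : X, DiWalk N.edge N.root (N.leaf x) n}

/-- `c` is a lowest common ancestor of `u` and `v`: a common ancestor no proper
descendant of which is a common ancestor of `u` and `v`. -/
def PhyloNet.IsLCA {X : Type} (N : PhyloNet X) (u v c : N.V) : Prop :=
  N.anc c u ∧ N.anc c v ∧ ∀ w, N.anc c w → N.anc w u → N.anc w v → w = c

/-- The height function of the network `N`: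
`h_N(i,j) = min { l_N − d(c,r) : c a lowest common ancestor of i and j }`. -/
noncomputable def PhyloNet.hN {X : Type} (N : PhyloNet X) (i j : X) : ℕ :=
  sInf {m | ∃ c : N.V, N.IsLCA (N.leaf i) (N.leaf j) c ∧ m = N.lN - N.dep c}

/-- `f` is a directed path (walk with no repeated node) from `u` to `v`. -/
def IsDiPath {V : Type} (E : V → V → Prop) {n : ℕ} (f : Fin (n + 1) → V) (u v : V) : Prop :=
  f 0 = u ∧ f (Fin.last n) = v ∧ (∀ i : Fin n, E (f i.castSucc) (f i.succ)) ∧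
    Function.Injective f

/-- Two paths are internally node-disjoint: every common node is an endpoint of both. -/
def IntDisj {V : Type} {m n : ℕ} (f : Fin (m + 1) → V) (g : Fin (n + 1) → V) : Prop :=
  ∀ (a : Fin (m + 1)) (b : Fin (n + 1)), f a = g b →
    (a = 0 ∨ a = Fin.last m) ∧ (b = 0 ∨ b = Fin.last n)

/-- The triplet `ij|k` is consistent with the network `N`: `N` contains distinct nodes
`u`, `v` and pairwise internally node-disjoint directed paths
`u → i`, `u → j`, `v → u`, and `v → k`. -/
def PhyloNet.TripCons {X : Type} (N : PhyloNet X) (i j k : X) : Prop :=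
  ∃ u v : N.V, u ≠ v ∧
    ∃ (a b c d : ℕ) (p : Fin (a + 1) → N.V) (q : Fin (b + 1) → N.V)
      (s : Fin (c + 1) → N.V) (t : Fin (d + 1) → N.V),
      IsDiPath N.edge p u (N.leaf i) ∧ IsDiPath N.edge q u (N.leaf j) ∧
      IsDiPath N.edge s v u ∧ IsDiPath N.edge t v (N.leaf k) ∧
      IntDisj p q ∧ IntDisj p s ∧ IntDisj p t ∧ IntDisj q s ∧ IntDisj q t ∧ IntDisj s t


section Aux

open Relation

variable {V : Type} {E : V → V → Prop}

lemma diwalk_rtg_aux {n : ℕ} {f : Fin (n + 1) → V}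
    (hc : ∀ i : Fin n, E (f i.castSucc) (f i.succ)) :
    ∀ b (hb : b < n + 1) a (ha : a < n + 1), a ≤ b →
      Relation.ReflTransGen E (f ⟨a, ha⟩) (f ⟨b, hb⟩) := by
  intro b
  induction b with
  | zero =>
    intro hb a ha hab
    have : a = 0 := by omega
    subst this; exact .refl
  | succ b ih =>
    intro hb a ha hab
    rcases Nat.lt_or_ge a (b + 1) with hlt | hge
    · have h1 := ih (by omega) a ha (by omega)
      refine h1.tail ?_
      exact hc ⟨b, by omega⟩
    · have : a = b + 1 := by omega
      subst this; exact .refl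

lemma diwalk_rtg {u v : V} {n : ℕ} (h : DiWalk E u v n) : Relation.ReflTransGen E u v := by
  obtain ⟨f, h0, hl, hc⟩ := h
  have := diwalk_rtg_aux hc n (by omega) 0 (by omega) (by omega)
  rwa [show (⟨0, by omega⟩ : Fin (n + 1)) = 0 from rfl, h0,
    show (⟨n, by omega⟩ : Fin (n + 1)) = Fin.last n from rfl, hl] at this

lemma diwalk_snoc {r u v : V} {n : ℕ} (h : DiWalk E r u n) (e : E u v) :
    DiWalk E r v (n + 1) := by
  obtain ⟨f, h0, hl, hc⟩ := h
  refine ⟨fun m => if hm : m.val < n + 1 then f ⟨m.val, hm⟩ else v, ?_, ?_, ?_⟩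
  · simpa using h0
  · simp [Fin.last]
  · intro i
    by_cases hi : i.val + 1 < n + 1
    · simp only [Fin.coe_castSucc, Fin.val_succ]
      rw [dif_pos (by omega), dif_pos hi]
      exact hc ⟨i.val, by omega⟩
    · have hin : i.val = n := by have := i.isLt; omega
      simp only [Fin.coe_castSucc, Fin.val_succ]
      rw [dif_pos (by omega), dif_neg (by omega)]
      have : (⟨i.val, by omega⟩ : Fin (n + 1)) = Fin.last n := by
        apply Fin.ext; simp [Fin.last, hin]
      rw [this, hl]; exact e

lemma rtg_diwalk {u v : V} (h : Relation.ReflTransGen E u v) : ∃ n, DiWalk E u v n := by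
  induction h with
  | refl => exact ⟨0, fun _ => u, rfl, rfl, fun i => i.elim0⟩
  | tail _ e ih => obtain ⟨n, hn⟩ := ih; exact ⟨n + 1, diwalk_snoc hn e⟩

lemma diwalk_le_card [Fintype V] (hacyc : ∀ v, ¬ Relation.TransGen E v v)
    {u v : V} {n : ℕ} (h : DiWalk E u v n) : n ≤ Fintype.card V := by
  by_contra hn
  push_neg at hn
  obtain ⟨f, h0, hl, hc⟩ := h
  obtain ⟨a, b, hab, hfeq⟩ := Fintype.exists_ne_map_eq_of_card_lt f (by simp; omega)
  have key : ∀ (a b : Fin (n + 1)), a.val < b.val → f a = f b → False := by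
    intro a b hlt heq
    have e1 : E (f ⟨a.val, by omega⟩) (f ⟨a.val + 1, by omega⟩) :=
      hc ⟨a.val, by omega⟩
    have h2 : Relation.ReflTransGen E (f ⟨a.val + 1, by omega⟩) (f ⟨b.val, by omega⟩) :=
      diwalk_rtg_aux hc b.val (by omega) (a.val + 1) (by omega) (by omega)
    have : Relation.TransGen E (f a) (f b) := by
      have := Relation.TransGen.head' e1 h2
      rwa [show (⟨a.val, a.isLt⟩ : Fin (n + 1)) = a from rfl,
        show (⟨b.val, b.isLt⟩ : Fin (n + 1)) = b from rfl] at this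
    rw [heq] at this
    exact hacyc _ this
  rcases Nat.lt_trichotomy a.val b.val with hlt | heq | hgt
  · exact key a b hlt hfeq
  · exact hab (Fin.ext heq)
  · exact key b a hgt hfeq.symm

lemma walk_node_anc {n : ℕ} {f : Fin (n + 1) → V} {u v : V} (h0 : f 0 = u)
    (hl : f (Fin.last n) = v) (hc : ∀ i : Fin n, E (f i.castSucc) (f i.succ))
    (m : Fin (n + 1)) :
    Relation.ReflTransGen E u (f m) ∧ Relation.ReflTransGen E (f m) v := by
  constructor
  · have := diwalk_rtg_aux hc m.val m.isLt 0 (by omega) (by omega)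
    rwa [show (⟨0, by omega⟩ : Fin (n + 1)) = 0 from rfl, h0,
      show (⟨m.val, m.isLt⟩ : Fin (n + 1)) = m from rfl] at this
  · have := diwalk_rtg_aux hc n (by omega) m.val m.isLt (by omega)
    rwa [show (⟨n, by omega⟩ : Fin (n + 1)) = Fin.last n from rfl, hl,
      show (⟨m.val, m.isLt⟩ : Fin (n + 1)) = m from rfl] at this

lemma diwalk_shortcut {n : ℕ} {f : Fin (n + 1) → V}
    (hc : ∀ i : Fin n, E (f i.castSucc) (f i.succ))
    {a b : ℕ} (hab : a < b) (hb : b ≤ n)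
    (heq : f ⟨a, by omega⟩ = f ⟨b, by omega⟩) :
    DiWalk E (f 0) (f (Fin.last n)) (n - (b - a)) := by
  have hstep : ∀ (m : ℕ) (hm : m < n), E (f ⟨m, by omega⟩) (f ⟨m + 1, by omega⟩) :=
    fun m hm => hc ⟨m, hm⟩
  refine ⟨fun m => if hm : m.val ≤ a then f ⟨m.val, by omega⟩
    else f ⟨m.val + (b - a), by have := m.isLt; omega⟩, ?_, ?_, ?_⟩
  · beta_reduce
    rw [dif_pos (show ((0 : Fin (n - (b - a) + 1)) : ℕ) ≤ a by simp)]
    exact congrArg f (Fin.ext (by simp))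
  · by_cases hle : n - (b - a) ≤ a
    · have hnb : n = b := by omega
      simp only [Fin.last]
      rw [dif_pos hle]
      have h1 : (⟨n - (b - a), by omega⟩ : Fin (n + 1)) = ⟨a, by omega⟩ := by
        apply Fin.ext; simp; omega
      rw [h1, heq]
      congr 1
      apply Fin.ext; simp [Fin.last]; omega
    · simp only [Fin.last]
      rw [dif_neg hle]
      congr 1
      apply Fin.ext; simp [Fin.last]; omega
  · intro i
    have hi := i.isLt
    simp only [Fin.coe_castSucc, Fin.val_succ]
    by_cases h1 : i.val + 1 ≤ a
    · rw [dif_pos (by omega), dif_pos h1]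
      exact hstep i.val (by omega)
    · by_cases h2 : i.val ≤ a
      · have hia : i.val = a := by omega
        have hbn : b < n := by omega
        rw [dif_pos h2, dif_neg h1]
        have e1 : (⟨i.val, by omega⟩ : Fin (n + 1)) = ⟨a, by omega⟩ := by
          apply Fin.ext; simpa using hia
        rw [e1, heq]
        have e2 : (⟨i.val + 1 + (b - a), by omega⟩ : Fin (n + 1)) = ⟨b + 1, by omega⟩ := by
          apply Fin.ext; simp; omega
        rw [e2]
        exact hstep b hbn
      · rw [dif_neg h2, dif_neg (by omega)]
        have e2 : (⟨i.val + 1 + (b - a), by omega⟩ : Fin (n + 1)) =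
            ⟨i.val + (b - a) + 1, by omega⟩ := by
          apply Fin.ext; simp; omega
        rw [e2]
        exact hstep (i.val + (b - a)) (by omega)

lemma exists_dipath {u v : V} (h : Relation.ReflTransGen E u v) :
    ∃ (n : ℕ) (f : Fin (n + 1) → V), IsDiPath E f u v := by
  classical
  have hne : {n | DiWalk E u v n}.Nonempty := rtg_diwalk h
  obtain ⟨M, hM, hMmin⟩ : ∃ M, DiWalk E u v M ∧ ∀ m, DiWalk E u v m → M ≤ m :=
    ⟨sInf {n | DiWalk E u v n}, Nat.sInf_mem hne, fun m hm => Nat.sInf_le hm⟩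
  obtain ⟨f, h0, hl, hc⟩ := hM
  refine ⟨M, f, h0, hl, hc, ?_⟩
  intro x y hxy
  by_contra hne'
  have key : ∀ (x y : Fin (M + 1)), x.val < y.val → f x = f y → False := by
    intro x y hlt heq
    have hw : DiWalk E u v (M - (y.val - x.val)) := by
      have := diwalk_shortcut (a := x.val) (b := y.val) hc hlt (by omega) heq
      rwa [h0, hl] at this
    have hle := hMmin _ hw
    have hy := y.isLt
    omega
  rcases Nat.lt_trichotomy x.val y.val with hlt | heq | hgt
  · exact key x y hlt hxy
  · exact hne' (Fin.ext heq)
  · exact key y x hgt hxy.symm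

end Aux

section PhyloAux

variable {X : Type} (N : PhyloNet X)

lemma PhyloNet.depS_bdd (v : N.V) : BddAbove {n | DiWalk N.edge N.root v n} := by
  haveI := N.fin
  exact ⟨Fintype.card N.V, fun n hn => diwalk_le_card N.acyclic hn⟩

lemma PhyloNet.dep_spec (v : N.V) : DiWalk N.edge N.root v (N.dep v) :=
  Nat.sSup_mem (rtg_diwalk (N.reach v)) (N.depS_bdd v)

lemma PhyloNet.dep_edge {u v : N.V} (e : N.edge u v) : N.dep u + 1 ≤ N.dep v :=
  le_csSup (N.depS_bdd v) (diwalk_snoc (N.dep_spec u) e)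

lemma PhyloNet.dep_anc {u v : N.V} (h : N.anc u v) : N.dep u ≤ N.dep v := by
  induction h with
  | refl => exact le_rfl
  | tail _ e ih => exact le_trans ih (by have := N.dep_edge e; omega)

lemma PhyloNet.dep_anc_strict {u v : N.V} (h : N.anc u v) (hne : u ≠ v) :
    N.dep u < N.dep v := by
  rcases Relation.ReflTransGen.cases_head h with heq | ⟨w, e, hw⟩
  · exact absurd heq hne
  · have h1 := N.dep_edge e
    have h2 := N.dep_anc hw
    omega

lemma PhyloNet.anc_antisymm {u v : N.V} (h1 : N.anc u v) (h2 : N.anc v u) : u = v := by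
  by_contra hne
  have := N.dep_anc_strict h1 hne
  have := N.dep_anc_strict h2 (Ne.symm hne)
  omega

lemma PhyloNet.exists_lca {w a b : N.V} (ha : N.anc w a) (hb : N.anc w b) :
    ∃ c, N.IsLCA a b c ∧ N.anc w c := by
  classical
  haveI := N.fin
  set S : Finset N.V := Finset.univ.filter (fun c => N.anc w c ∧ N.anc c a ∧ N.anc c b)
    with hS
  have hwS : w ∈ S := by
    simp only [hS, Finset.mem_filter, Finset.mem_univ, true_and]
    exact ⟨Relation.ReflTransGen.refl, ha, hb⟩
  obtain ⟨c, hcS, hmax⟩ := S.exists_max_image N.dep ⟨w, hwS⟩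
  simp only [hS, Finset.mem_filter, Finset.mem_univ, true_and] at hcS
  refine ⟨c, ⟨hcS.2.1, hcS.2.2, ?_⟩, hcS.1⟩
  intro z hcz hza hzb
  by_contra hne
  have hzS : z ∈ S := by
    simp only [hS, Finset.mem_filter, Finset.mem_univ, true_and]
    exact ⟨hcS.1.trans hcz, hza, hzb⟩
  have h1 := hmax z hzS
  have h2 := N.dep_anc_strict hcz (fun h => hne h.symm)
  omega

lemma PhyloNet.hN_le {i j : X} {c : N.V} (h : N.IsLCA (N.leaf i) (N.leaf j) c) :
    N.hN i j ≤ N.lN - N.dep c :=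
  Nat.sInf_le ⟨c, h, rfl⟩

lemma PhyloNet.hN_attained (i j : X) :
    ∃ c, N.IsLCA (N.leaf i) (N.leaf j) c ∧ N.hN i j = N.lN - N.dep c := by
  obtain ⟨c0, hc0, -⟩ := N.exists_lca (N.reach (N.leaf i)) (N.reach (N.leaf j))
  have hne : {m | ∃ c : N.V, N.IsLCA (N.leaf i) (N.leaf j) c ∧ m = N.lN - N.dep c}.Nonempty :=
    ⟨N.lN - N.dep c0, c0, hc0, rfl⟩
  obtain ⟨c, h1, h2⟩ := Nat.sInf_mem hne
  exact ⟨c, h1, h2⟩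

end PhyloAux

/-- for distinct leaves `i, j, k` of a rooted phylogenetic network `N`,
if `h_N(i,j) < h_N(i,k)` or `h_N(i,j) < h_N(j,k)` then `ij|k` is consistent with `N`. -/
theorem tripcons_of_height_lt {X : Type} (N : PhyloNet X) (i j k : X)
    (hij : i ≠ j) (hik : i ≠ k) (hjk : j ≠ k)
    (h : N.hN i j < N.hN i k ∨ N.hN i j < N.hN j k) :
    N.TripCons i j k := by
  classical
  obtain ⟨c, hc, hceq⟩ := N.hN_attained i j
  have hcnk : ¬ N.anc c (N.leaf k) := by
    intro hck
    rcases h with h1 | h2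
    · obtain ⟨c'', hc'', hwc⟩ := N.exists_lca hc.1 hck
      have ha := N.hN_le hc''
      have hd := N.dep_anc hwc
      have := Nat.sub_le_sub_left hd N.lN
      omega
    · obtain ⟨c'', hc'', hwc⟩ := N.exists_lca hc.2.1 hck
      have ha := N.hN_le hc''
      have hd := N.dep_anc hwc
      have := Nat.sub_le_sub_left hd N.lN
      omega
  obtain ⟨v, hv, -⟩ := N.exists_lca (N.reach c) (N.reach (N.leaf k))
  have hvc : c ≠ v := fun h => hcnk (h ▸ hv.2.1)
  obtain ⟨a, p, hp⟩ := exists_dipath (hc.1 : Relation.ReflTransGen N.edge _ _)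
  obtain ⟨b, q, hq⟩ := exists_dipath (hc.2.1 : Relation.ReflTransGen N.edge _ _)
  obtain ⟨cl, s, hs⟩ := exists_dipath (hv.1 : Relation.ReflTransGen N.edge _ _)
  obtain ⟨dl, t, ht⟩ := exists_dipath (hv.2.1 : Relation.ReflTransGen N.edge _ _)
  obtain ⟨hp0, hpl, hpc, hpinj⟩ := hp
  obtain ⟨hq0, hql, hqc, hqinj⟩ := hq
  obtain ⟨hs0, hsl, hsc, hsinj⟩ := hs
  obtain ⟨ht0, htl, htc, htinj⟩ := ht
  refine ⟨c, v, hvc, a, b, cl, dl, p, q, s, t, ⟨hp0, hpl, hpc, hpinj⟩,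
    ⟨hq0, hql, hqc, hqinj⟩, ⟨hs0, hsl, hsc, hsinj⟩, ⟨ht0, htl, htc, htinj⟩,
    ?_, ?_, ?_, ?_, ?_, ?_⟩
  · -- p q
    intro α β heq
    have h1 := walk_node_anc hp0 hpl hpc α
    have h2 := walk_node_anc hq0 hql hqc β
    have hcα : p α = c := hc.2.2 (p α) h1.1 h1.2 (by rw [heq]; exact h2.2)
    constructor
    · exact Or.inl (hpinj (hcα.trans hp0.symm))
    · exact Or.inl (hqinj ((heq.symm.trans hcα).trans hq0.symm))
  · -- p s
    intro α β heq
    have h1 := walk_node_anc hp0 hpl hpc α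
    have h2 := walk_node_anc hs0 hsl hsc β
    have hcα : c = p α := N.anc_antisymm h1.1 (by rw [heq]; exact h2.2)
    constructor
    · exact Or.inl (hpinj (hcα.symm.trans hp0.symm))
    · exact Or.inr (hsinj ((heq.symm.trans hcα.symm).trans hsl.symm))
  · -- p t
    intro α β heq
    have h1 := walk_node_anc hp0 hpl hpc α
    have h2 := walk_node_anc ht0 htl htc β
    exact absurd (h1.1.trans (show N.anc (p α) (N.leaf k) by rw [heq]; exact h2.2)) hcnk
  · -- q s
    intro α β heq
    have h1 := walk_node_anc hq0 hql hqc α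
    have h2 := walk_node_anc hs0 hsl hsc β
    have hcα : c = q α := N.anc_antisymm h1.1 (by rw [heq]; exact h2.2)
    constructor
    · exact Or.inl (hqinj (hcα.symm.trans hq0.symm))
    · exact Or.inr (hsinj ((heq.symm.trans hcα.symm).trans hsl.symm))
  · -- q t
    intro α β heq
    have h1 := walk_node_anc hq0 hql hqc α
    have h2 := walk_node_anc ht0 htl htc β
    exact absurd (h1.1.trans (show N.anc (q α) (N.leaf k) by rw [heq]; exact h2.2)) hcnk
  · -- s t
    intro α β heq
    have h1 := walk_node_anc hs0 hsl hsc α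
    have h2 := walk_node_anc ht0 htl htc β
    have hvα : s α = v := hv.2.2 (s α) h1.1 h1.2 (by rw [heq]; exact h2.2)
    constructor
    · exact Or.inl (hsinj (hvα.trans hs0.symm))
    · exact Or.inl (htinj ((heq.symm.trans hvα).trans ht0.symm))
end

section
/- The converse of the height criterion for networks fails: there exists a rooted phylogenetic network N and distinct leaves i, j, k such that the triplet ij|k is consistent with N but h_N(i,j) ≥ h_N(i,k) and h_N(i,j) ≥ h_N(j,k). -/
/-!
In the network with edges `root → v`, `v → u`, `v → w`, `u → w`, `u → li`, `u → lj`, `w → lk`,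
the paths `u → li`, `u → lj`, `v → u` and `v → w → lk` witness `ij|k`. But through the
reticulation `w` the node `u` is also an ancestor of `lk`, so `u` is the unique lowest common
ancestor of every pair of leaves and all three heights equal `l_N − d(u, r)`.
-/

theorem Relation.TransGen.rank_lt {α β : Type*} [Preorder β] {E : α → α → Prop} (rank : α → β)
    (hE : ∀ a b, E a b → rank a < rank b) {a b : α} (h : TransGen E a b) : rank a < rank b := by
  simpa only [transGen_eq_self] using h.lift rank hE

theorem Relation.reflTransGen_of_split_last {α : Type*} {E R : α → α → Prop} (rank : α → ℕ)
    (hE : ∀ a b, E a b → rank a < rank b) (hR : ∀ a b, R a b → a = b ∨ ∃ c, R a c ∧ E c b)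
    {a b : α} (h : R a b) : ReflTransGen E a b := by
  induction hb : rank b using Nat.strong_induction_on generalizing b with
  | _ n ih =>
    rcases hR a b h with rfl | ⟨c, hac, hcb⟩
    · exact .refl
    · exact (ih _ (hb ▸ hE c b hcb) hac rfl).tail hcb

theorem PhyloNet.hN_eq_of_isLCA_iff {X : Type} (N : PhyloNet X) {i j : X} {c₀ : N.V}
    (h : ∀ c, N.IsLCA (N.leaf i) (N.leaf j) c ↔ c = c₀) : N.hN i j = N.lN - N.dep c₀ := by
  have hset : {m | ∃ c, N.IsLCA (N.leaf i) (N.leaf j) c ∧ m = N.lN - N.dep c} =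
      {N.lN - N.dep c₀} := by
    ext m
    simp [h]
  rw [PhyloNet.hN, hset, csInf_singleton]

namespace HeightCounterexample

inductive Node
  | root | v | u | w | li | lj | lk
  deriving DecidableEq

open Node

instance : Fintype Node :=
  ⟨{root, v, u, w, li, lj, lk}, fun x => by cases x <;> decide⟩

def edge (a b : Node) : Prop :=
  (a, b) ∈ [(root, v), (v, u), (v, w), (u, w), (u, li), (u, lj), (w, lk)]

instance : DecidableRel edge := fun _ _ => inferInstanceAs (Decidable (_ ∈ _))

def rank : Node → ℕ
  | root => 0 | v => 1 | u => 2 | w => 3 | li => 3 | lj => 3 | lk => 4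

def descendants : Node → List Node
  | root => [root, v, u, w, li, lj, lk]
  | v => [v, u, w, li, lj, lk]
  | u => [u, w, li, lj, lk]
  | w => [w, lk]
  | li => [li]
  | lj => [lj]
  | lk => [lk]

theorem rank_lt_of_edge : ∀ a b, edge a b → rank a < rank b := by
  decide

theorem reflTransGen_edge_iff {a b : Node} :
    Relation.ReflTransGen edge a b ↔ b ∈ descendants a := by
  constructor
  · intro h
    induction h using Relation.ReflTransGen.head_induction_on with
    | refl => revert b; decide
    | head hac _ ih =>
      exact (by decide : ∀ a c b, edge a c → b ∈ descendants c → b ∈ descendants a) _ _ _ hac ih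
  · exact Relation.reflTransGen_of_split_last (R := fun a b => b ∈ descendants a) rank
      rank_lt_of_edge (by decide)

abbrev net : PhyloNet (Fin 3) where
  V := Node
  edge := edge
  acyclic x h := (Relation.TransGen.rank_lt rank rank_lt_of_edge h).false
  root := root
  root_src := by decide
  reach x := reflTransGen_edge_iff.2 (by cases x <;> decide)
  leaf := ![li, lj, lk]
  leaf_inj := by decide
  leaf_sink := by decide
  sink_leaf := by decide

theorem net_isLCA_leaf_iff {x y : Fin 3} (hxy : x ≠ y) (c : Node) :
    net.IsLCA (net.leaf x) (net.leaf y) c ↔ c = u := by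
  simp only [PhyloNet.IsLCA, PhyloNet.anc, reflTransGen_edge_iff]
  revert x y c
  decide

theorem net_tripCons : net.TripCons 0 1 2 := by
  refine ⟨u, v, by decide, 1, 1, 1, 2, ![u, li], ![u, lj], ![v, u], ![v, w, lk], ?_⟩
  unfold IsDiPath IntDisj
  and_intros <;> decide

theorem net_hN {x y : Fin 3} (hxy : x ≠ y) : net.hN x y = net.lN - net.dep u :=
  net.hN_eq_of_isLCA_iff (net_isLCA_leaf_iff hxy)

end HeightCounterexample

/-- the converse of the height criterion fails: there is a rooted
phylogenetic network `N` and distinct leaves `i, j, k` with `ij|k` consistent with `N`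
but `h_N(i,j) ≥ h_N(i,k)` and `h_N(i,j) ≥ h_N(j,k)`. -/
theorem height_criterion_converse_fails :
    ∃ (X : Type) (N : PhyloNet X) (i j k : X),
      i ≠ j ∧ i ≠ k ∧ j ≠ k ∧ N.TripCons i j k ∧
      N.hN i k ≤ N.hN i j ∧ N.hN j k ≤ N.hN i j := by
  open HeightCounterexample in
  refine ⟨Fin 3, net, 0, 1, 2, by decide, by decide, by decide, net_tripCons, ?_, ?_⟩
  · rw [net_hN (by decide : (0 : Fin 3) ≠ 2), net_hN (by decide : (0 : Fin 3) ≠ 1)]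
  · rw [net_hN (by decide : (1 : Fin 3) ≠ 2), net_hN (by decide : (0 : Fin 3) ≠ 1)]
end

section
/- Let τ be a set of triplets consistent with a tree and h = h_{T_τ} its height function. If e is an edge {a,b} of maximum weight in the complete weighted graph (G,h) on L(τ) (i.e., h(a,b) = l_{T_τ}), then removing all maximum-weight edges from (G,h) disconnects it into components exactly equal to the leaf sets of the subtrees hanging from the root of T_τ. -/
/-- let `T` be a tree consistent with `τ` (the BUILD tree `T_τ`) and
`h = h_T` its height function.  Suppose the complete weighted graph `(G,h)` on the
leaf set has an edge of maximum weight `l_T`.  After removing all maximum-weight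
edges (those `{a,b}` with `h(a,b) = l_T`, i.e. keeping exactly the edges with
`h(a,b) < l_T`), two leaves lie in the same connected component iff their lca is
not the root, i.e. the components are exactly the leaf sets of the subtrees
hanging from the root of `T`. -/
theorem remove_max_edges_components {X : Type} (τ : Set (X × X × X))
    (T : PhyloTree X) (hT : ∀ t ∈ τ, T.Consistent t.1 t.2.1 t.2.2)
    (hmax : ∃ a b : X, a ≠ b ∧ T.hgt a b = T.lT) :
    ∀ a b : X,
      Relation.ReflTransGen (fun x y : X => x ≠ y ∧ T.hgt x y < T.lT) a b ↔
        (a = b ∨ T.lca (T.leaf a) (T.leaf b) ≠ T.root) := by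
  obtain ⟨a0, b0, hab0, -⟩ := hmax
  have : Fintype T.V := T.fin
  have hle : ∀ v, T.depth v ≤ T.lT := fun v =>
    le_csSup (Set.finite_range T.depth).bddAbove ⟨v, rfl⟩
  have hzero : ∀ v : T.V, T.depth v = 0 → v = T.root := by
    intro v hv
    by_contra h
    have h1 := T.depth_strict T.root v (T.root_anc v) (fun e => h e.symm)
    have h2 := T.depth_root
    omega
  have hlt : 0 < T.lT := by
    have hne : T.leaf a0 ≠ T.leaf b0 := fun e => hab0 (T.leaf_inj e)
    have hor : T.lca (T.leaf a0) (T.leaf b0) ≠ T.leaf a0 ∨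
        T.lca (T.leaf a0) (T.leaf b0) ≠ T.leaf b0 := by
      by_contra h; push_neg at h; exact hne (h.1.symm.trans h.2)
    rcases hor with h | h
    · have h1 := T.depth_strict _ _ (T.lca_anc_left (T.leaf a0) (T.leaf b0)) h
      have h2 := hle (T.leaf a0); omega
    · have h1 := T.depth_strict _ _ (T.lca_anc_right (T.leaf a0) (T.leaf b0)) h
      have h2 := hle (T.leaf b0); omega
  have key : ∀ x y : X, (T.hgt x y < T.lT) ↔ T.lca (T.leaf x) (T.leaf y) ≠ T.root := by
    intro x y
    unfold PhyloTree.hgt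
    constructor
    · intro h hr; rw [hr, T.depth_root] at h; omega
    · intro h
      have hd : T.depth (T.lca (T.leaf x) (T.leaf y)) ≠ 0 := fun e => h (hzero _ e)
      have h2 := hle (T.lca (T.leaf x) (T.leaf y))
      omega
  have htrans : ∀ a b c : X, T.lca (T.leaf a) (T.leaf b) ≠ T.root →
      T.lca (T.leaf b) (T.leaf c) ≠ T.root → T.lca (T.leaf a) (T.leaf c) ≠ T.root := by
    intro a b c h1 h2 h3
    have hu : T.anc (T.lca (T.leaf a) (T.leaf b)) (T.leaf b) := T.lca_anc_right _ _
    have hv : T.anc (T.lca (T.leaf b) (T.leaf c)) (T.leaf b) := T.lca_anc_left _ _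
    rcases T.anc_total _ _ _ hu hv with h | h
    · have hc : T.anc (T.lca (T.leaf a) (T.leaf b)) (T.leaf c) :=
        T.anc_trans _ _ _ h (T.lca_anc_right _ _)
      have hg := T.lca_greatest (T.leaf a) (T.leaf c) _ (T.lca_anc_left _ _) hc
      rw [h3] at hg
      exact h1 (T.anc_antisymm _ _ hg (T.root_anc _))
    · have ha : T.anc (T.lca (T.leaf b) (T.leaf c)) (T.leaf a) :=
        T.anc_trans _ _ _ h (T.lca_anc_left _ _)
      have hg := T.lca_greatest (T.leaf a) (T.leaf c) _ ha (T.lca_anc_right _ _)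
      rw [h3] at hg
      exact h2 (T.anc_antisymm _ _ hg (T.root_anc _))
  intro a b
  constructor
  · intro h
    induction h with
    | refl => left; rfl
    | tail hab hbc ih =>
      rcases ih with rfl | h1
      · right; exact (key _ _).mp hbc.2
      · right; exact htrans _ _ _ h1 ((key _ _).mp hbc.2)
  · rintro (rfl | h)
    · exact .refl
    · by_cases hab : a = b
      · subst hab; exact .refl
      · exact .single ⟨hab, (key a b).mpr h⟩
end
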